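/- Let z_1,...,z_k be independent Gumbel random variables with z_i having location θ_i and ∑_j exp θ_j = 1. Then the joint density of z conditioned on the order event {z_{b_1} ≥ ... ≥ z_{b_k}} factorizes as f_0(z_{b_1}) · ∏_{i=2}^k f^{z_{b_{i-1}}}_{log Θ_i}(z_{b_i}), where Θ_i = ∑_{j=i}^k exp θ_{b_j} and f^{z_0}_μ denotes the Gumbel density with location μ truncated at z_0. Equivalently, p(b|z)p(z|θ) = p(b|θ)p(z|b,θ) where p(b|θ) is the Plackett-Luce probability. -/

import Mathlib

/-- Gumbel density with location `μ`. -/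
noncomputable def gumbelPDF (μ z : ℝ) : ℝ :=
  Real.exp (-z + μ) * Real.exp (-Real.exp (-z + μ))

/-- Gumbel CDF with location `μ`. -/
noncomputable def gumbelCDF (μ z : ℝ) : ℝ := Real.exp (-Real.exp (-z + μ))

open Classical in
/-- Density of the Gumbel distribution with location `μ` truncated at `z₀`. -/
noncomputable def truncGumbelPDF (μ z₀ z : ℝ) : ℝ :=
  gumbelPDF μ z * (if z ≤ z₀ then 1 else 0) / gumbelCDF μ z₀

/-- Plackett–Luce probability of permutation `b` under scores `θ`. -/
noncomputable def plackettLuce {k : ℕ} (θ : Fin k → ℝ) (b : Equiv.Perm (Fin k)) : ℝ :=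
  ∏ m : Fin k,
    Real.exp (θ (b m)) / ∑ u ∈ Finset.univ.filter (fun u => m ≤ u), Real.exp (θ (b u))

/-!
Put `E m = exp θ_{b_m}`, `w m = exp (-z_{b_m})` and let `Θ m = ∑_{u ≥ m} E u` be the tail sums, so
that `Θ 0 = 1` and `Θ m - Θ (m+1) = E m`. On the ordering event both sides are
`(∏ E) (∏ w) exp (-∑ E w)`: the Plackett–Luce factor contributes `∏ E / ∏ Θ`, the `Θ`'s cancel
against the prefactors of the truncated densities, and their exponents add up to `-∑ E w` by Abel
summation. Off the ordering event some adjacent pair is out of order, and the corresponding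
truncated density vanishes.
-/

open Finset Real

section TailSum

variable {M : Type*} [AddCommMonoid M] {n : ℕ}

def tailSum (x : Fin n → M) (m : Fin n) : M :=
  ∑ u ∈ univ.filter (fun u => m ≤ u), x u

theorem tailSum_pos [PartialOrder M] [IsOrderedCancelAddMonoid M] {x : Fin n → M}
    (hx : ∀ u, 0 < x u) (m : Fin n) : 0 < tailSum x m :=
  sum_pos (fun u _ => hx u) ⟨m, by simp⟩

variable (x : Fin (n + 1) → M)

theorem tailSum_zero : tailSum x 0 = ∑ u, x u := by
  simp [tailSum]

theorem tailSum_last : tailSum x (Fin.last n) = x (Fin.last n) := by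
  have : univ.filter (fun u => Fin.last n ≤ u) = {Fin.last n} := by
    ext u; simp [Fin.le_def, Fin.ext_iff]; omega
  rw [tailSum, this, sum_singleton]

theorem tailSum_castSucc (i : Fin n) :
    tailSum x i.castSucc = x i.castSucc + tailSum x i.succ := by
  have : univ.filter (fun u => i.castSucc ≤ u)
      = insert i.castSucc (univ.filter (fun u => i.succ ≤ u)) := by
    ext u; simp [Fin.le_def, Fin.ext_iff]; omega
  rw [tailSum, this, sum_insert (by simp [Fin.le_def])]
  rfl

end TailSum

theorem plackettLuce_eq_div {k : ℕ} (θ : Fin k → ℝ) (b : Equiv.Perm (Fin k)) :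
    plackettLuce θ b
      = (∏ m, exp (θ (b m))) / ∏ m, tailSum (fun m => exp (θ (b m))) m :=
  prod_div_distrib _ _

theorem sum_mul_eq_tailSum_mul_sub {R : Type*} [CommRing R] {n : ℕ} (E w : Fin (n + 1) → R) :
    ∑ m, E m * w m
      = tailSum E 0 * w 0 + ∑ i : Fin n, tailSum E i.succ * (w i.succ - w i.castSucc) := by
  have h_succ : ∑ i : Fin n, tailSum E i.succ * w i.succ
      = ∑ m, tailSum E m * w m - tailSum E 0 * w 0 := by
    rw [Fin.sum_univ_succ]; ring
  have h_castSucc : ∑ i : Fin n, tailSum E i.succ * w i.castSucc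
      = (∑ m, tailSum E m * w m - tailSum E (Fin.last n) * w (Fin.last n))
        - (∑ m, E m * w m - E (Fin.last n) * w (Fin.last n)) := by
    rw [Fin.sum_univ_castSucc (fun m => tailSum E m * w m),
      Fin.sum_univ_castSucc (fun m => E m * w m), add_sub_cancel_right, add_sub_cancel_right,
      ← sum_sub_distrib]
    exact sum_congr rfl fun i _ => by rw [tailSum_castSucc]; ring
  simp only [mul_sub, sum_sub_distrib, h_succ, h_castSucc, tailSum_last]
  ring

theorem gumbelPDF_eq (μ z : ℝ) :
    gumbelPDF μ z = exp μ * exp (-z) * exp (-(exp μ * exp (-z))) := by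
  simp only [gumbelPDF, exp_add, mul_comm]

theorem gumbelCDF_eq (μ z : ℝ) : gumbelCDF μ z = exp (-(exp μ * exp (-z))) := by
  simp only [gumbelCDF, exp_add, mul_comm]

theorem truncGumbelPDF_log_of_le {c z₀ z : ℝ} (hc : 0 < c) (h : z ≤ z₀) :
    truncGumbelPDF (log c) z₀ z = c * exp (-z) * exp (c * exp (-z₀) - c * exp (-z)) := by
  simp only [truncGumbelPDF, gumbelCDF_eq, gumbelPDF_eq, if_pos h, exp_log hc, mul_one]
  rw [mul_div_assoc, ← exp_sub, neg_sub_neg]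

theorem truncGumbelPDF_of_lt (μ : ℝ) {z₀ z : ℝ} (h : z₀ < z) : truncGumbelPDF μ z₀ z = 0 := by
  simp [truncGumbelPDF, not_le.2 h]

theorem prod_mul_exp_neg {n : ℕ} (a : Fin n → ℝ) :
    ∏ m, a m * exp (-a m) = (∏ m, a m) * exp (-∑ m, a m) := by
  rw [prod_mul_distrib, ← exp_sum, sum_neg_distrib]

theorem prod_mul_exp_neg_eq_tailSum_factorization {k : ℕ} (E w : Fin (k + 1) → ℝ)
    (hE : ∀ m, 0 < E m) (hsum : ∑ m, E m = 1) :
    ∏ m, E m * w m * exp (-(E m * w m))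
      = (∏ m, E m) / (∏ m, tailSum E m) *
          (w 0 * exp (-w 0) * ∏ i : Fin k, tailSum E i.succ * w i.succ *
            exp (tailSum E i.succ * w i.castSucc - tailSum E i.succ * w i.succ)) := by
  have hΘ_zero : tailSum E 0 = 1 := (tailSum_zero E).trans hsum
  have h_abel := sum_mul_eq_tailSum_mul_sub E w
  set Θ := tailSum E
  have hΘ_ne : ∏ i : Fin k, Θ i.succ ≠ 0 := (prod_pos fun i _ => tailSum_pos hE i.succ).ne'
  have hΘ_prod : ∏ m, Θ m = ∏ i : Fin k, Θ i.succ := by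
    rw [Fin.prod_univ_succ, hΘ_zero, one_mul]
  have h_exponent : -w 0 + ∑ i : Fin k, (Θ i.succ * w i.castSucc - Θ i.succ * w i.succ)
      = -∑ m, E m * w m := by
    rw [h_abel, hΘ_zero]
    simp only [mul_sub, sum_sub_distrib]
    ring
  rw [prod_mul_exp_neg (fun m => E m * w m), prod_mul_distrib, prod_mul_distrib,
    prod_mul_distrib, ← exp_sum, ← h_exponent, exp_add, hΘ_prod, Fin.prod_univ_succ w]
  field_simp

open Classical in
/-- Proposition 1 (density form): for independent Gumbels `z_i ∼ G(θ_i, 1)` with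
`∑_j exp θ_j = 1`, the joint density `p(b ∣ z) p(z ∣ θ)` factorizes as
`p(b ∣ θ) · f_0(z_{b_1}) ∏_{i=2}^k f^{z_{b_{i-1}}}_{log Θ_i}(z_{b_i})`, where
`Θ_i = ∑_{j ≥ i} exp θ_{b_j}`, `p(b ∣ z)` is the indicator of the ordering event and
`p(b ∣ θ)` is the Plackett–Luce probability. -/
theorem conditional_gumbel_factorization (k : ℕ) (θ : Fin (k + 1) → ℝ)
    (hsum : ∑ i : Fin (k + 1), Real.exp (θ i) = 1)
    (b : Equiv.Perm (Fin (k + 1))) (z : Fin (k + 1) → ℝ) :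
    (if ∀ i j : Fin (k + 1), i ≤ j → z (b j) ≤ z (b i) then (1:ℝ) else 0) *
        ∏ i : Fin (k + 1), gumbelPDF (θ i) (z i)
      = plackettLuce θ b *
          (gumbelPDF 0 (z (b 0)) *
            ∏ i : Fin k,
              truncGumbelPDF
                (Real.log (∑ u ∈ Finset.univ.filter (fun u => i.succ ≤ u),
                  Real.exp (θ (b u))))
                (z (b i.castSucc)) (z (b i.succ))) := by
  set E : Fin (k + 1) → ℝ := fun m => exp (θ (b m))
  have hE_pos (m : Fin (k + 1)) : 0 < E m := exp_pos _
  have hE_sum : ∑ m, E m = 1 := (Equiv.sum_comp b fun i => exp (θ i)).trans hsum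
  by_cases hord : ∀ i j : Fin (k + 1), i ≤ j → z (b j) ≤ z (b i)
  · have h_joint : ∏ i, gumbelPDF (θ i) (z i)
        = ∏ m, E m * exp (-z (b m)) * exp (-(E m * exp (-z (b m)))) := by
      rw [← Equiv.prod_comp b]
      simp only [gumbelPDF_eq, E]
    have h_trunc : ∏ i : Fin k, truncGumbelPDF (log (tailSum E i.succ))
          (z (b i.castSucc)) (z (b i.succ))
        = ∏ i : Fin k, tailSum E i.succ * exp (-z (b i.succ)) *
            exp (tailSum E i.succ * exp (-z (b i.castSucc))
              - tailSum E i.succ * exp (-z (b i.succ))) :=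
      prod_congr rfl fun i _ =>
        truncGumbelPDF_log_of_le (tailSum_pos hE_pos _) (hord _ _ (Fin.castSucc_le_succ i))
    rw [if_pos hord, one_mul, h_joint,
      prod_mul_exp_neg_eq_tailSum_factorization E _ hE_pos hE_sum, plackettLuce_eq_div, gumbelPDF_eq, exp_zero, one_mul]
    exact congrArg (_ * ·) (congrArg (_ * ·) h_trunc.symm)
  · obtain ⟨i, hi⟩ : ∃ i : Fin k, z (b i.castSucc) < z (b i.succ) := by
      simpa [Fin.antitone_iff_succ_le] using fun h : Antitone (z ∘ b) => hord fun i j hij => h hij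
    rw [if_neg hord, zero_mul, prod_eq_zero (mem_univ i) (truncGumbelPDF_of_lt _ hi),
      mul_zero, mul_zero]
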